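/- arXiv:1105.2948 — 3 statements merged into one kernel-verified Lean document; each statement's English description precedes it below -/
import Mathlib

section
/- The function $F(x,A) = \frac{\int_{x/A^{1/3}}^\infty e^{-2y^3/9}\,dy}{\int_0^\infty e^{-2y^3/9}\,dy}$ satisfies $\partial_x^2 F(x,A) - 2x\,\partial_A F(x,A) = 0$ for all $x > 0$ and $A > 0$, together with the boundary conditions $F(0,A) = 1$ for $A>0$ and $\lim_{x\to\infty} F(x,A) = 0$. -/
/-!
With the similarity variable `η = x / A^{1/3}` one has `F = G(η) / G(0)` for the tail integral
`G(η) = ∫_η^∞ w` of `w(y) = e^{-2y³/9}`. Since `G' = -w` and `w' = -(2/3) y² w`, both `∂ₓ²F` and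
`2x ∂_A F` equal `(2/3) x² w(η) / (A^{4/3} G(0))`. The boundary values are `G(0)/G(0) = 1` and
`G(η) → 0` as `η → ∞`, which holds because `w` is integrable on every half-line.
-/

open MeasureTheory Filter Set Real

/-- The function `F(x,A) = (∫_{x/A^{1/3}}^∞ e^{-2y³/9} dy) / (∫_0^∞ e^{-2y³/9} dy)`. -/
noncomputable def F1 (x A : ℝ) : ℝ :=
  (∫ y in Set.Ioi (x / A ^ ((1:ℝ)/3)), Real.exp (-2 * y ^ 3 / 9)) /
  (∫ y in Set.Ioi (0:ℝ), Real.exp (-2 * y ^ 3 / 9))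

theorem hasDerivAt_integral_Ioi {E : Type*} [NormedAddCommGroup E] [NormedSpace ℝ E]
    [CompleteSpace E] {f : ℝ → E} (hf : Continuous f) (hint : ∀ s, IntegrableOn f (Ioi s))
    (t : ℝ) : HasDerivAt (fun s => ∫ y in Ioi s, f y) (-f t) t := by
  have hsplit : (fun s => ∫ y in Ioi s, f y) = fun s => (∫ y in Ioi t, f y) - ∫ y in t..s, f y :=
    funext fun s => by
      rw [← intervalIntegral.integral_Ioi_sub_Ioi' (hint t) (hint s), sub_sub_cancel]
  rw [hsplit]
  exact (intervalIntegral.integral_hasDerivAt_right (hf.intervalIntegrable t t)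
    (hf.stronglyMeasurableAtFilter _ _) hf.continuousAt).const_sub _

noncomputable def cubicGaussian (y : ℝ) : ℝ := exp (-2 * y ^ 3 / 9)

theorem continuous_cubicGaussian : Continuous cubicGaussian := by
  unfold cubicGaussian; fun_prop

theorem hasDerivAt_cubicGaussian (y : ℝ) :
    HasDerivAt cubicGaussian (-(2 / 3) * y ^ 2 * cubicGaussian y) y := by
  refine (((hasDerivAt_pow 3 y).const_mul (-2)).div_const 9).exp.congr_deriv ?_
  rw [cubicGaussian]
  ring

theorem integrableOn_Ioi_cubicGaussian (t : ℝ) : IntegrableOn cubicGaussian (Ioi t) := by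
  refine integrable_of_isBigO_exp_neg one_pos continuous_cubicGaussian.continuousOn
    (Asymptotics.IsBigO.of_bound 1 ?_)
  filter_upwards [eventually_ge_atTop 3] with y hy
  rw [cubicGaussian, norm_of_nonneg (exp_pos _).le, norm_of_nonneg (exp_pos _).le, one_mul]
  exact exp_le_exp.2 (by nlinarith [mul_le_mul hy hy (by norm_num) (by linarith)])

noncomputable def cubicGaussianTail (t : ℝ) : ℝ := ∫ y in Ioi t, cubicGaussian y

theorem hasDerivAt_cubicGaussianTail (t : ℝ) :
    HasDerivAt cubicGaussianTail (-cubicGaussian t) t :=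
  hasDerivAt_integral_Ioi continuous_cubicGaussian integrableOn_Ioi_cubicGaussian t

theorem cubicGaussianTail_pos (t : ℝ) : 0 < cubicGaussianTail t := by
  refine (setIntegral_pos_iff_support_of_nonneg_ae
    (Eventually.of_forall fun y => (exp_pos _).le) (integrableOn_Ioi_cubicGaussian t)).2 ?_
  rw [Function.support_eq_univ fun y => (exp_pos _).ne', univ_inter, volume_Ioi]
  exact ENNReal.zero_lt_top

theorem tendsto_cubicGaussianTail_atTop : Tendsto cubicGaussianTail atTop (nhds 0) :=
  tendsto_integral_Ioi_zero tendsto_id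

theorem F1_eq (x A : ℝ) :
    F1 x A = cubicGaussianTail (x / A ^ ((1:ℝ)/3)) / cubicGaussianTail 0 := rfl

theorem hasDerivAt_F1_fst (x A : ℝ) :
    HasDerivAt (fun z => F1 z A)
      (-cubicGaussian (x / A ^ ((1:ℝ)/3)) / A ^ ((1:ℝ)/3) / cubicGaussianTail 0) x := by
  refine (((hasDerivAt_cubicGaussianTail _).comp x
    ((hasDerivAt_id' x).div_const (A ^ ((1:ℝ)/3)))).div_const
      (cubicGaussianTail 0)).congr_deriv ?_
  field_simp

theorem hasDerivAt_deriv_F1_fst (x A : ℝ) :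
    HasDerivAt (deriv fun z => F1 z A)
      ((2 / 3) * x ^ 2 * cubicGaussian (x / A ^ ((1:ℝ)/3)) / (A ^ ((1:ℝ)/3)) ^ 4 /
        cubicGaussianTail 0) x := by
  rw [funext fun x => (hasDerivAt_F1_fst x A).deriv]
  refine ((((hasDerivAt_cubicGaussian _).comp x
    ((hasDerivAt_id' x).div_const (A ^ ((1:ℝ)/3)))).neg.div_const _).div_const _).congr_deriv ?_
  field_simp

theorem hasDerivAt_F1_snd (x : ℝ) {A : ℝ} (hA : 0 < A) :
    HasDerivAt (fun a => F1 x a)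
      (x * cubicGaussian (x / A ^ ((1:ℝ)/3)) / (3 * A * A ^ ((1:ℝ)/3)) / cubicGaussianTail 0)
      A := by
  have hB : 0 < A ^ ((1:ℝ)/3) := rpow_pos_of_pos hA _
  have hroot : HasDerivAt (fun a => x / a ^ ((1:ℝ)/3)) (-x / (3 * A * A ^ ((1:ℝ)/3))) A := by
    refine ((((hasDerivAt_id' A).rpow_const (p := (1:ℝ)/3) (Or.inl hA.ne')).fun_inv
      hB.ne').const_mul x).congr_deriv ?_
    rw [rpow_sub_one hA.ne']
    field_simp
  refine (((hasDerivAt_cubicGaussianTail _).comp A hroot).div_const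
    (cubicGaussianTail 0)).congr_deriv ?_
  field_simp

/-- `F1` satisfies `∂²ₓF - 2x ∂_A F = 0` on `{x > 0, A > 0}`, with
`F(0,A) = 1` and `F(x,A) → 0` as `x → ∞`. -/
theorem stmt_1 :
    (∀ x A : ℝ, 0 < x → 0 < A →
      deriv (fun y => deriv (fun z => F1 z A) y) x - 2 * x * deriv (fun a => F1 x a) A = 0) ∧
    (∀ A : ℝ, 0 < A → F1 0 A = 1) ∧
    (∀ A : ℝ, 0 < A → Tendsto (fun x => F1 x A) atTop (nhds 0)) := by
  refine ⟨fun x A _ hA => ?_, fun A _ => ?_, fun A hA => ?_⟩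
  · rw [(hasDerivAt_deriv_F1_fst x A).deriv, (hasDerivAt_F1_snd x hA).deriv]
    set B := A ^ ((1:ℝ)/3) with hB_def
    have hB : 0 < B := rpow_pos_of_pos hA _
    have hcube : B ^ 3 = A := by
      rw [hB_def, one_div, ← Nat.cast_ofNat, rpow_inv_natCast_pow hA.le (by norm_num)]
    rw [← hcube]
    field_simp
    ring
  · rw [F1_eq, zero_div, div_self (cubicGaussianTail_pos 0).ne']
  · have hlim : Tendsto (fun x => x / A ^ ((1:ℝ)/3)) atTop atTop :=
      tendsto_id.atTop_div_const (rpow_pos_of_pos hA _)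
    simpa only [F1_eq, Function.comp_def, zero_div] using
      (tendsto_cubicGaussianTail_atTop.comp hlim).div_const (cubicGaussianTail 0)
end

section
/- Let $U_1, U_2$ be independent, identically distributed positive random variables with $P(U_i \le a) = \exp(-\frac{2}{9a} + O(\log(1/a)))$ as $a \to 0^+$. Then as $x \to 0^+$, $P(U_1 + U_2 \le x) = \exp(-\frac{8}{9x} + O(\log(1/x)))$. -/
/-!
If `F(a) = exp(-c/a + O(log(1/a)))` is the distribution function of `U₁` and `U₂`, then
`P(U₁ + U₂ ≤ x) ≥ F(x/2)²` by independence, which gives the lower bound `exp(-4c/x + O(log(1/x)))`.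
For the upper bound, cover `{U₁ + U₂ ≤ x}` by the `n = ⌈1/x⌉` grid cells
`{U₁ ≤ (k+1)h, U₂ ≤ (n-k)h}` of mesh `h = x/n ≤ x²`. A cell has probability at most
`exp(-c/a - c/b + O(log(1/x)))` with `a + b = x + h`, and `c/a + c/b ≥ 4c/(a+b)`; the shift by `h`
and the number of cells only cost `O(log(1/x))`.
-/

open MeasureTheory ProbabilityTheory Filter

open Real Set Finset Topology

lemma Real.log_one_div_le_of_pow_le {x a : ℝ} {m : ℕ} (hx : 0 < x) (hxa : x ^ m ≤ a) :
    log (1 / a) ≤ m * log (1 / x) := by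
  rw [one_div, log_inv, one_div, log_inv, mul_neg, ← log_pow]
  linarith [log_le_log (pow_pos hx m) hxa]

lemma Real.le_exp_neg_add_of_abs_log_add_le {y s t : ℝ} (h : |log y + s| ≤ t) :
    y ≤ exp (-s + t) :=
  (le_exp_log y).trans (exp_le_exp.2 (by linarith [(abs_le.1 h).2]))

lemma Real.pos_of_abs_log_add_le {y s t : ℝ} (hy : 0 ≤ y) (h : |log y + s| ≤ t) (hts : t < s) :
    0 < y := by
  refine hy.lt_of_ne fun hy0 => ?_
  rw [← hy0, log_zero, zero_add] at h
  linarith [le_abs_self s]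

lemma four_mul_div_add_le_div_add_div {c a b : ℝ} (hc : 0 ≤ c) (ha : 0 < a) (hb : 0 < b) :
    4 * c / (a + b) ≤ c / a + c / b := by
  rw [div_add_div _ _ ha.ne' hb.ne', div_le_div_iff₀ (by positivity) (by positivity)]
  nlinarith [mul_nonneg hc (sq_nonneg (a - b))]

lemma eventually_mul_log_one_div_lt_div {c : ℝ} (hc : 0 < c) (C : ℝ) :
    ∀ᶠ a in 𝓝[>] (0 : ℝ), C * log (1 / a) < c / a := by
  have hlim : Tendsto (fun a => C * (log a * a)) (𝓝[>] 0) (𝓝 0) := by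
    simpa using (tendsto_log_mul_rpow_nhdsGT_zero one_pos).const_mul C
  filter_upwards [hlim.eventually (lt_mem_nhds (neg_neg_of_pos hc)), self_mem_nhdsWithin]
    with a hlt (ha : 0 < a)
  rw [lt_div_iff₀ ha, one_div, log_inv]
  linarith

lemma exists_lt_le_mul_and_le_mul_of_add_le {u v h : ℝ} {n : ℕ} (hu : 0 < u) (hv : 0 ≤ v)
    (hh : 0 < h) (huv : u + v ≤ n * h) :
    ∃ k < n, u ≤ (k + 1) * h ∧ v ≤ (n - k) * h := by
  obtain ⟨k, hk⟩ := Nat.exists_eq_succ_of_ne_zero (Nat.ceil_pos.2 (div_pos hu hh)).ne'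
  have hk_lt : (k : ℝ) < u / h := Nat.lt_ceil.1 (hk ▸ Nat.lt_succ_self k)
  have hk_le : u / h ≤ k + 1 := by exact_mod_cast hk ▸ Nat.le_ceil (u / h)
  have hun : u / h ≤ n := by rw [div_le_iff₀ hh]; linarith
  refine ⟨k, by exact_mod_cast (Nat.ceil_le.2 hun).trans_lt' (hk ▸ Nat.lt_succ_self k), ?_, ?_⟩
  · rwa [div_le_iff₀ hh] at hk_le
  · rw [lt_div_iff₀ hh] at hk_lt
    nlinarith

section Independent

variable {Ω : Type*} {mΩ : MeasurableSpace Ω} {μ : Measure Ω} {X Y : Ω → ℝ}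

lemma ProbabilityTheory.IndepFun.measureReal_le_inter_le (hXY : IndepFun X Y μ) (a b : ℝ) :
    μ.real ({ω | X ω ≤ a} ∩ {ω | Y ω ≤ b}) = μ.real {ω | X ω ≤ a} * μ.real {ω | Y ω ≤ b} := by
  simp only [measureReal_def, ← ENNReal.toReal_mul]
  exact congrArg _ (hXY.measure_inter_preimage_eq_mul _ _ measurableSet_Iic measurableSet_Iic)

lemma ProbabilityTheory.IndepFun.mul_measureReal_le_le_measureReal_add_le [IsFiniteMeasure μ]
    (hXY : IndepFun X Y μ) (a b : ℝ) :
    μ.real {ω | X ω ≤ a} * μ.real {ω | Y ω ≤ b} ≤ μ.real {ω | X ω + Y ω ≤ a + b} := by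
  rw [← hXY.measureReal_le_inter_le]
  exact measureReal_mono fun _ ⟨hX, hY⟩ => add_le_add (α := ℝ) hX hY

lemma ProbabilityTheory.IndepFun.measureReal_add_le_le_sum [IsFiniteMeasure μ]
    (hXY : IndepFun X Y μ) (hX : ∀ᵐ ω ∂μ, 0 < X ω) (hY : ∀ᵐ ω ∂μ, 0 ≤ Y ω) {h : ℝ} (hh : 0 < h)
    (n : ℕ) :
    μ.real {ω | X ω + Y ω ≤ n * h} ≤
      ∑ k ∈ range n, μ.real {ω | X ω ≤ (k + 1) * h} * μ.real {ω | Y ω ≤ (n - k) * h} := by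
  have hcover : {ω | X ω + Y ω ≤ n * h} ≤ᵐ[μ]
      ⋃ k ∈ range n, {ω | X ω ≤ (k + 1) * h} ∩ {ω | Y ω ≤ (n - k) * h} := by
    filter_upwards [hX, hY] with ω hXω hYω hω
    obtain ⟨k, hk, hXk, hYk⟩ := exists_lt_le_mul_and_le_mul_of_add_le hXω hYω hh hω
    exact mem_biUnion (mem_range.2 hk) ⟨hXk, hYk⟩
  calc μ.real {ω | X ω + Y ω ≤ n * h}
      ≤ μ.real (⋃ k ∈ range n, {ω | X ω ≤ (k + 1) * h} ∩ {ω | Y ω ≤ (n - k) * h}) :=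
        ENNReal.toReal_mono (measure_ne_top _ _) (measure_mono_ae hcover)
    _ ≤ ∑ k ∈ range n, μ.real ({ω | X ω ≤ (k + 1) * h} ∩ {ω | Y ω ≤ (n - k) * h}) :=
        measureReal_biUnion_finset_le _ _
    _ = _ := sum_congr rfl fun k _ => hXY.measureReal_le_inter_le _ _

end Independent

section TailAsymptotics

variable {F G : ℝ → ℝ} {c C a₀ : ℝ}

lemma mul_le_exp_of_abs_log_add_le {y z a b M : ℝ} (hz : 0 ≤ z) (hc : 0 ≤ c) (hC : 0 ≤ C)
    (ha : 0 < a) (hb : 0 < b) (hy : |log y + c / a| ≤ C * log (1 / a))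
    (hz' : |log z + c / b| ≤ C * log (1 / b)) (hMa : log (1 / a) ≤ M) (hMb : log (1 / b) ≤ M) :
    y * z ≤ exp (-(4 * c / (a + b)) + 2 * C * M) := by
  calc y * z ≤ exp (-(c / a) + C * log (1 / a)) * exp (-(c / b) + C * log (1 / b)) :=
        mul_le_mul (le_exp_neg_add_of_abs_log_add_le hy) (le_exp_neg_add_of_abs_log_add_le hz')
          hz (exp_nonneg _)
    _ = exp (-(c / a + c / b) + (C * log (1 / a) + C * log (1 / b))) := by
        rw [← exp_add]; ring_nf
    _ ≤ exp (-(4 * c / (a + b)) + 2 * C * M) := by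
        have := four_mul_div_add_le_div_add_div hc ha hb
        gcongr exp ?_
        nlinarith

lemma eventually_pos_and_log_ge_of_sq_half_le (hc : 0 < c) (hC : 0 ≤ C) (ha₀ : 0 < a₀)
    (hF0 : ∀ a, 0 ≤ F a) (hF : ∀ a, 0 < a → a < a₀ → |log (F a) + c / a| ≤ C * log (1 / a))
    (hG : ∀ x, F (x / 2) ^ 2 ≤ G x) :
    ∀ᶠ x in 𝓝[>] 0, 0 < G x ∧ -(4 * c / x) - 4 * C * log (1 / x) ≤ log (G x) := by
  filter_upwards [Ioo_mem_nhdsGT (lt_min ha₀ one_half_pos),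
    eventually_mul_log_one_div_lt_div hc C] with x ⟨hx, hxa⟩ hsmall
  have hx₀ : x < a₀ := hxa.trans_le (min_le_left _ _)
  have hx2 : x ≤ 1 / 2 := (hxa.trans_le (min_le_right _ _)).le
  have hlog : log (1 / (x / 2)) ≤ 2 * log (1 / x) :=
    log_one_div_le_of_pow_le hx (by nlinarith)
  have hdiv : c / (x / 2) = 2 * (c / x) := by field_simp
  have hFx := hF (x / 2) (half_pos hx) (by linarith)
  have hCM : C * log (1 / (x / 2)) ≤ 2 * (C * log (1 / x)) := by nlinarith
  -- Since `log 0 = 0`, `F (x / 2) = 0` would force `c / (x / 2) ≤ C * log (1 / (x / 2))`.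
  have hpos : 0 < F (x / 2) := pos_of_abs_log_add_le (hF0 _) hFx (by linarith)
  have hGpos : 0 < G x := (pow_pos hpos 2).trans_le (hG x)
  refine ⟨hGpos, ?_⟩
  calc -(4 * c / x) - 4 * C * log (1 / x) ≤ 2 * log (F (x / 2)) := by
        have := (abs_le.1 hFx).1
        rw [mul_div_assoc]; linarith
    _ = log (F (x / 2) ^ 2) := by rw [log_pow]; norm_num
    _ ≤ log (G x) := log_le_log (pow_pos hpos 2) (hG x)

lemma sum_mul_le_exp_of_pow_three_le {x h : ℝ} {n : ℕ} (hc : 0 ≤ c) (hC : 0 ≤ C)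
    (hF0 : ∀ a, 0 ≤ F a) (hF : ∀ a, 0 < a → a < a₀ → |log (F a) + c / a| ≤ C * log (1 / a))
    (hx : 0 < x) (hx₀ : x < a₀) (hxh : x ^ 3 ≤ h) (hnh : n * h = x) :
    ∑ k ∈ range n, F ((k + 1) * h) * F ((n - k) * h) ≤
      n * exp (-(4 * c / (x + h)) + 6 * C * log (1 / x)) := by
  have hh : 0 < h := (pow_pos hx 3).trans_le hxh
  have hlog (a : ℝ) (ha : h ≤ a) : log (1 / a) ≤ 3 * log (1 / x) :=
    mod_cast log_one_div_le_of_pow_le hx (hxh.trans ha)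
  have hterm : ∀ k ∈ range n,
      F ((k + 1) * h) * F ((n - k) * h) ≤ exp (-(4 * c / (x + h)) + 6 * C * log (1 / x)) := by
    intro k hk
    have hk : (k : ℝ) + 1 ≤ n := by exact_mod_cast mem_range.1 hk
    have hk0 : (0 : ℝ) ≤ k := k.cast_nonneg
    have hsum : (k + 1) * h + (n - k) * h = x + h := by rw [← hnh]; ring
    rw [← hsum, show 6 * C = 2 * C * 3 by ring, mul_assoc _ 3]
    exact mul_le_exp_of_abs_log_add_le (hF0 _) hc hC (by positivity) (by nlinarith)
      (hF _ (by positivity) (by nlinarith)) (hF _ (by nlinarith) (by nlinarith))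
      (hlog _ (by nlinarith)) (hlog _ (by nlinarith))
  simpa using sum_le_sum hterm

lemma eventually_le_exp_of_le_sum (hc : 0 ≤ c) (hC : 0 ≤ C) (ha₀ : 0 < a₀)
    (hF0 : ∀ a, 0 ≤ F a) (hF : ∀ a, 0 < a → a < a₀ → |log (F a) + c / a| ≤ C * log (1 / a))
    (hG : ∀ x, 0 < x → ∀ n : ℕ, 0 < n →
      G x ≤ ∑ k ∈ range n, F ((k + 1) * (x / n)) * F ((n - k) * (x / n))) :
    ∀ᶠ x in 𝓝[>] 0, G x ≤ exp (-(4 * c / x) + (6 * C + 4 * c + 2) * log (1 / x)) := by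
  filter_upwards [Ioo_mem_nhdsGT (lt_min ha₀ (by norm_num : (0 : ℝ) < 1 / 3))]
    with x ⟨hx, hxa⟩
  have hx₀ : x < a₀ := hxa.trans_le (min_le_left _ _)
  have hx3 : x < 1 / 3 := hxa.trans_le (min_le_right _ _)
  set L := log (1 / x)
  have hL : 1 ≤ L := by
    rw [le_log_iff_exp_le (by positivity), le_div_iff₀ hx]
    nlinarith [exp_one_lt_d9]
  set n := ⌈1 / x⌉₊
  have hn : 0 < n := Nat.ceil_pos.2 (by positivity)
  have hnR : (0 : ℝ) < n := Nat.cast_pos.2 hn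
  have hnx : 1 ≤ n * x := by rw [← div_le_iff₀ hx]; exact Nat.le_ceil _
  have hn_sq : (n : ℝ) ≤ (1 / x) ^ 2 := by
    have : 3 < 1 / x := by rw [lt_div_iff₀ hx]; linarith
    nlinarith [Nat.ceil_lt_add_one (by positivity : 0 ≤ 1 / x)]
  set h := x / n
  have hh : 0 < h := by positivity
  have hxh : x ^ 3 ≤ h := by
    rw [le_div_iff₀ hnR]
    rw [div_pow, one_pow, le_div_iff₀ (by positivity)] at hn_sq
    nlinarith
  have hcorr : 4 * c / x - 4 * c / (x + h) ≤ 4 * c * L := by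
    have : 4 * c / x - 4 * c / (x + h) = 4 * c * (h / (x * (x + h))) := by field_simp; ring
    rw [this]
    have hhx : h ≤ x ^ 2 := by rw [div_le_iff₀ hnR]; nlinarith
    gcongr
    rw [div_le_iff₀ (by positivity)]
    nlinarith [mul_pos hx (add_pos hx hh)]
  calc G x ≤ n * exp (-(4 * c / (x + h)) + 6 * C * L) :=
        (hG x hx n hn).trans (sum_mul_le_exp_of_pow_three_le hc hC hF0 hF hx hx₀ hxh
          (mul_div_cancel₀ _ hnR.ne'))
    _ ≤ exp (2 * L) * exp (-(4 * c / (x + h)) + 6 * C * L) := by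
        gcongr
        rw [← log_le_iff_le_exp hnR]
        calc log n ≤ log ((1 / x) ^ 2) := log_le_log hnR hn_sq
          _ = 2 * L := by rw [log_pow, Nat.cast_ofNat]
    _ ≤ exp (-(4 * c / x) + (6 * C + 4 * c + 2) * L) := by
        rw [← exp_add]
        exact exp_le_exp.2 (by linarith)

theorem exists_abs_log_add_four_mul_div_le (hc : 0 < c) (hC : 0 ≤ C) (ha₀ : 0 < a₀)
    (hF0 : ∀ a, 0 ≤ F a)
    (hF : ∀ a, 0 < a → a < a₀ → |log (F a) + c / a| ≤ C * log (1 / a))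
    (hGlow : ∀ x, F (x / 2) ^ 2 ≤ G x)
    (hGup : ∀ x, 0 < x → ∀ n : ℕ, 0 < n →
      G x ≤ ∑ k ∈ range n, F ((k + 1) * (x / n)) * F ((n - k) * (x / n))) :
    ∃ C' > 0, ∃ x₀ > 0, ∀ x, 0 < x → x < x₀ → |log (G x) + 4 * c / x| ≤ C' * log (1 / x) := by
  obtain ⟨x₀, hx₀, hx⟩ := (nhdsGT_basis (0 : ℝ)).eventually_iff.1 <|
    (eventually_pos_and_log_ge_of_sq_half_le hc hC ha₀ hF0 hF hGlow).and <|
      (eventually_le_exp_of_le_sum hc.le hC ha₀ hF0 hF hGup).and (Ioo_mem_nhdsGT one_pos)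
  refine ⟨6 * C + 4 * c + 2, by positivity, x₀, hx₀, fun x hx0 hxx₀ => ?_⟩
  obtain ⟨⟨hGpos, hlow⟩, hup, -, hx1⟩ := hx ⟨hx0, hxx₀⟩
  have hL : 0 ≤ log (1 / x) := log_nonneg (one_le_one_div hx0 hx1.le)
  have hup' := (log_le_iff_le_exp hGpos).2 hup
  rw [abs_le]
  constructor <;> nlinarith [mul_nonneg (by positivity : 0 ≤ 2 * C + 4 * c + 2) hL]

end TailAsymptotics

theorem stmt_3_general {Ω : Type*} {mΩ : MeasurableSpace Ω}
    (P : Measure Ω) [IsProbabilityMeasure P]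
    (U₁ U₂ : Ω → ℝ)
    (hpos : ∀ᵐ ω ∂P, 0 < U₁ ω)
    (hindep : IndepFun U₁ U₂ P)
    (hid : IdentDistrib U₁ U₂ P P)
    (htail : ∃ C > (0:ℝ), ∃ a₀ > (0:ℝ), ∀ a : ℝ, 0 < a → a < a₀ →
      |Real.log ((P {ω | U₁ ω ≤ a}).toReal) + 2 / (9 * a)| ≤ C * Real.log (1 / a)) :
    ∃ C > (0:ℝ), ∃ x₀ > (0:ℝ), ∀ x : ℝ, 0 < x → x < x₀ →
      |Real.log ((P {ω | U₁ ω + U₂ ω ≤ x}).toReal) + 8 / (9 * x)| ≤ C * Real.log (1 / x) := by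
  obtain ⟨C, hC, a₀, ha₀, htail⟩ := htail
  have hU₂ (b : ℝ) : P.real {ω | U₂ ω ≤ b} = P.real {ω | U₁ ω ≤ b} :=
    congrArg ENNReal.toReal (hid.measure_mem_eq measurableSet_Iic).symm
  have hpos₂ : ∀ᵐ ω ∂P, 0 ≤ U₂ ω :=
    hid.ae_snd measurableSet_Ici (hpos.mono fun _ h => h.le)
  obtain ⟨C', hC', x₀, hx₀, h⟩ := exists_abs_log_add_four_mul_div_le
    (F := fun a => P.real {ω | U₁ ω ≤ a}) (G := fun x => P.real {ω | U₁ ω + U₂ ω ≤ x})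
    (c := 2 / 9) (by norm_num) hC.le ha₀ (fun _ => measureReal_nonneg)
    (fun a ha haa => by rw [div_div]; exact htail a ha haa)
    (fun x => by
      simpa [sq, hU₂] using hindep.mul_measureReal_le_le_measureReal_add_le (x / 2) (x / 2))
    (fun x hx n hn => by
      simpa [hU₂, mul_div_cancel₀ x (Nat.cast_pos.2 hn).ne'] using
        hindep.measureReal_add_le_le_sum hpos hpos₂ (div_pos hx (Nat.cast_pos.2 hn)) n)
  refine ⟨C', hC', x₀, hx₀, fun x hx hxx₀ => ?_⟩
  rw [show 8 / (9 * x) = 4 * (2 / 9) / x by ring]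
  exact h x hx hxx₀

/-- if `U₁, U₂` are i.i.d. positive with
`P(Uᵢ ≤ a) = exp(-2/(9a) + O(log(1/a)))` as `a → 0⁺`, then
`P(U₁ + U₂ ≤ x) = exp(-8/(9x) + O(log(1/x)))` as `x → 0⁺`. -/
theorem stmt_3 {Ω : Type*} {mΩ : MeasurableSpace Ω}
    (P : Measure Ω) [IsProbabilityMeasure P]
    (U₁ U₂ : Ω → ℝ) (hm₁ : Measurable U₁) (hm₂ : Measurable U₂)
    (hpos : ∀ᵐ ω ∂P, 0 < U₁ ω)
    (hindep : IndepFun U₁ U₂ P)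
    (hid : IdentDistrib U₁ U₂ P P)
    (htail : ∃ C > (0:ℝ), ∃ a₀ > (0:ℝ), ∀ a : ℝ, 0 < a → a < a₀ →
      |Real.log ((P {ω | U₁ ω ≤ a}).toReal) + 2 / (9 * a)| ≤ C * Real.log (1 / a)) :
    ∃ C > (0:ℝ), ∃ x₀ > (0:ℝ), ∀ x : ℝ, 0 < x → x < x₀ →
      |Real.log ((P {ω | U₁ ω + U₂ ω ≤ x}).toReal) + 8 / (9 * x)| ≤ C * Real.log (1 / x) :=
  stmt_3_general (mΩ := mΩ) P U₁ U₂ hpos hindep hid htail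
end

section
/- Suppose a stochastic process $(X_t)_{t\ge0}$ satisfies the scaling property: for every $\lambda > 0$, $(X_{\lambda t})_{t\ge0}$ has the same law as $(\lambda^{2/3} X_t)_{t\ge0}$. Suppose also there exist constants $\kappa>0, C>0$ such that for all $x \ge 2$, $P(\sup_{t\in[0,1]} X_t \ge x) \le C x^C e^{-2\kappa x^3}$. Then for every $\varepsilon > 0$ and every $\lambda > 1$, $\sum_{n\ge1} P\big(\sup_{t\in[0,\lambda^n]} X_t \ge \frac{1+\varepsilon}{(2\kappa)^{1/3}} \lambda^{2n/3}(\ln\ln \lambda^n)^{1/3}\big) < \infty$, and consequently almost surely $\limsup_{t\to\infty} \frac{X_t}{t^{2/3}(\ln\ln t)^{1/3}} \le \frac{1+\varepsilon}{(2\kappa)^{1/3}}$. -/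
/-!
Write `φ t = t^{2/3} (log log t)^{1/3}`. By self-similarity,
`P(sup_{[0,T]} X ≥ c φ(T)) = P(sup_{[0,1]} X ≥ c (log log T)^{1/3})`, and for `T = λⁿ` the tail
bound makes this `O(n^{-2κc³} (log n)^{C/3})`, summable as soon as `2κc³ > 1`. By Borel–Cantelli,
almost surely `sup_{[0,u^{n+1}]} X < c φ(u^{n+1})` for all large `n`. Since `φ` is increasing and
`φ(u^{n+1}) ≤ u φ(uⁿ)` eventually, every `t ∈ [uⁿ, u^{n+1}]` then has `X_t ≤ c u φ(t)`; the choice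
`c = (1 + ε/2)/(2κ)^{1/3}`, `u = (1 + ε)/(1 + ε/2)` gives the bound.
-/

open MeasureTheory ProbabilityTheory Filter Set Real Asymptotics

-- Only meaningful for `t ≥ exp 1`, where `log (log t) ≥ 0`.
noncomputable def lilScale (α β t : ℝ) : ℝ := t ^ α * log (log t) ^ β

lemma lilScale_pos (α β : ℝ) {t : ℝ} (ht : exp 1 < t) : 0 < lilScale α β t := by
  have ht0 : 0 < t := (exp_pos 1).trans ht
  have hlog : 1 < log t := (lt_log_iff_exp_lt ht0).2 ht
  exact mul_pos (rpow_pos_of_pos ht0 α) (rpow_pos_of_pos (log_pos hlog) β)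

lemma lilScale_le_lilScale {α β s t : ℝ} (hα : 0 ≤ α) (hβ : 0 ≤ β) (hs : exp 1 ≤ s)
    (hst : s ≤ t) : lilScale α β s ≤ lilScale α β t := by
  have hs0 : 0 < s := (exp_pos 1).trans_le hs
  have hlog : 1 ≤ log s := (le_log_iff_exp_le hs0).2 hs
  have hloglog : 0 ≤ log (log s) := log_nonneg hlog
  exact mul_le_mul (rpow_le_rpow hs0.le hst hα)
    (rpow_le_rpow hloglog (log_le_log (by linarith) (log_le_log hs0 hst)) hβ)
    (rpow_nonneg hloglog β) (rpow_nonneg (hs0.le.trans hst) α)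

lemma tendsto_log_natCast_mul_atTop {L : ℝ} (hL : 0 < L) :
    Tendsto (fun n : ℕ => log (n * L)) atTop atTop :=
  tendsto_log_atTop.comp (tendsto_natCast_atTop_atTop.atTop_mul_const hL)

lemma eventually_log_succ_mul_le {L v : ℝ} (hL : 0 < L) (hv : 1 < v) :
    ∀ᶠ n : ℕ in atTop, log ((n + 1) * L) ≤ v * log (n * L) := by
  have hlarge : ∀ᶠ n : ℕ in atTop, log 2 ≤ (v - 1) * log (n * L) :=
    ((tendsto_log_natCast_mul_atTop hL).const_mul_atTop (sub_pos.2 hv)).eventually_ge_atTop _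
  filter_upwards [hlarge, eventually_ge_atTop 1] with n hn hn1
  have hn1' : (1 : ℝ) ≤ n := by exact_mod_cast hn1
  have hdouble : log ((n + 1) * L) ≤ log 2 + log (n * L) := by
    rw [← log_mul two_ne_zero (by positivity)]
    exact log_le_log (by positivity) (by nlinarith)
  linarith

lemma eventually_lilScale_pow_succ_le {α β u v : ℝ} (hβ : 0 ≤ β) (hu : 1 < u) (hv : 1 < v) :
    ∀ᶠ n : ℕ in atTop, lilScale α β (u ^ (n + 1)) ≤ u ^ α * v ^ β * lilScale α β (u ^ n) := by
  have hL : 0 < log u := log_pos hu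
  filter_upwards [eventually_log_succ_mul_le hL hv, eventually_ge_atTop 1,
    (tendsto_log_natCast_mul_atTop hL).eventually_ge_atTop 0] with n hstep hn1 hnonneg
  have hnL : 0 < n * log u := mul_pos (by exact_mod_cast hn1) hL
  have hsucc_nonneg : 0 ≤ log ((n + 1) * log u) :=
    hnonneg.trans (log_le_log hnL (by linarith))
  have hsucc : log ((n + 1) * log u) ^ β ≤ v ^ β * log (n * log u) ^ β := by
    rw [← mul_rpow (by linarith) hnonneg]
    exact rpow_le_rpow hsucc_nonneg hstep hβ
  have hpow : (u ^ (n + 1)) ^ α = u ^ α * (u ^ n) ^ α := by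
    rw [pow_succ, mul_rpow (by positivity) (by positivity), mul_comm]
  simp only [lilScale, hpow, log_pow]
  push_cast
  calc u ^ α * (u ^ n) ^ α * log ((n + 1) * log u) ^ β
      ≤ u ^ α * (u ^ n) ^ α * (v ^ β * log (n * log u) ^ β) := by gcongr
    _ = _ := by ring

/-- The hypothesis `0 ≤ B` covers the junk value `limsup f l = 0` of a real `limsup` that is not
bounded below. -/
lemma limsup_le_of_eventually_le_of_nonneg {α : Type*} {l : Filter α} {f : α → ℝ} {B : ℝ}
    (hB : 0 ≤ B) (h : ∀ᶠ x in l, f x ≤ B) : limsup f l ≤ B := by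
  rw [limsup_eq]
  by_cases hbdd : BddBelow {a | ∀ᶠ x in l, f x ≤ a}
  · exact csInf_le hbdd h
  · rwa [Real.sInf_of_not_bddBelow hbdd]

lemma limsup_div_le_of_le_on_Icc_pow {f φ : ℝ → ℝ} {u c K : ℝ} (hu : 1 < u) (hc : 0 ≤ c)
    (hK : 0 ≤ K) (hφ_mono : ∀ᶠ s in atTop, ∀ t, s ≤ t → φ s ≤ φ t)
    (hφ_pos : ∀ᶠ t in atTop, 0 < φ t)
    (hφ_step : ∀ᶠ n : ℕ in atTop, φ (u ^ (n + 1)) ≤ K * φ (u ^ n))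
    (hf : ∀ᶠ n : ℕ in atTop, ∀ t ∈ Icc (u ^ n) (u ^ (n + 1)), f t ≤ c * φ (u ^ (n + 1))) :
    limsup (fun t => f t / φ t) atTop ≤ c * K := by
  have hφ_mono_pow : ∀ᶠ n : ℕ in atTop, ∀ t, u ^ n ≤ t → φ (u ^ n) ≤ φ t :=
    (tendsto_pow_atTop_atTop_of_one_lt hu).eventually hφ_mono
  obtain ⟨N, hN⟩ := eventually_atTop.1 (hφ_step.and (hf.and hφ_mono_pow))
  refine limsup_le_of_eventually_le_of_nonneg (mul_nonneg hc hK) ?_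
  filter_upwards [eventually_ge_atTop (u ^ N), eventually_ge_atTop 1, hφ_pos] with t htN ht1 hφt
  obtain ⟨m, hmt, htm⟩ := exists_nat_pow_near ht1 hu
  have hNm : N ≤ m := Nat.lt_succ_iff.1 <| (pow_lt_pow_iff_right₀ hu).1 (htN.trans_lt htm)
  obtain ⟨hstep, hft, hmono⟩ := hN m hNm
  rw [div_le_iff₀ hφt]
  calc f t ≤ c * φ (u ^ (m + 1)) := hft t ⟨hmt, htm.le⟩
    _ ≤ c * (K * φ (u ^ m)) := mul_le_mul_of_nonneg_left hstep hc
    _ ≤ c * K * φ t := by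
      rw [← mul_assoc]; exact mul_le_mul_of_nonneg_left (hmono t hmt) (mul_nonneg hc hK)

lemma limsup_div_lilScale_le {α β u c : ℝ} {f : ℝ → ℝ} (hf : Continuous f) (hα : 0 ≤ α)
    (hβ : 0 ≤ β) (hu : 1 < u) (hc : 0 ≤ c)
    (h : ∀ᶠ n : ℕ in atTop, ⨆ t : Icc 0 (u ^ (n + 1)), f t < c * lilScale α β (u ^ (n + 1))) :
    limsup (fun t => f t / lilScale α β t) atTop ≤ c * (u ^ α * u ^ β) := by
  refine limsup_div_le_of_le_on_Icc_pow hu hc (by positivity) ?_ ?_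
    (eventually_lilScale_pow_succ_le hβ hu hu) ?_
  · filter_upwards [eventually_ge_atTop (exp 1)] with s hs t hst
    exact lilScale_le_lilScale hα hβ hs hst
  · filter_upwards [eventually_gt_atTop (exp 1)] with t ht
    exact lilScale_pos α β ht
  · filter_upwards [h] with n hn t ht
    have hbdd : BddAbove (range fun s : Icc 0 (u ^ (n + 1)) => f s) := by
      rw [← image_eq_range]; exact isCompact_Icc.bddAbove_image hf.continuousOn
    have h0 : (0 : ℝ) ≤ u ^ n := by positivity
    exact (le_ciSup hbdd ⟨t, h0.trans ht.1, ht.2⟩).trans hn.le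

lemma tendsto_natCast_add_one_mul_atTop {L : ℝ} (hL : 0 < L) :
    Tendsto (fun n : ℕ => (n + 1) * L) atTop atTop :=
  (tendsto_atTop_add_const_right _ 1 tendsto_natCast_atTop_atTop).atTop_mul_const hL

lemma summable_log_rpow_mul_rpow_neg {p r L : ℝ} (hp : 1 < p) (hL : 0 < L) :
    Summable fun n : ℕ => log ((n + 1) * L) ^ r * ((n + 1) * L) ^ (-p) := by
  obtain ⟨q, hq1, hqp⟩ := exists_between hp
  have hlog : (fun y => log y ^ r * y ^ (-p)) =O[atTop] fun y => y ^ (-q) := by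
    refine ((isLittleO_log_rpow_rpow_atTop r (sub_pos.2 hqp)).isBigO.mul
      (isBigO_refl (fun y : ℝ => y ^ (-p)) atTop)).trans_eventuallyEq ?_
    filter_upwards [eventually_gt_atTop 0] with y hy
    rw [← rpow_add hy]; ring_nf
  have hq : Summable fun n : ℕ => ((n + 1) * L) ^ (-q) := by
    have h := ((summable_nat_add_iff 1).2 (summable_nat_rpow.2 (neg_lt_neg hq1))).mul_right
      (L ^ (-q))
    refine h.congr fun n => ?_
    rw [mul_rpow (by positivity) hL.le]; push_cast; rfl
  exact summable_of_isBigO_nat hq (hlog.comp_tendsto (tendsto_natCast_add_one_mul_atTop hL))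

lemma mul_rpow_mul_exp_neg_cube_eq {C κ c y : ℝ} (hc : 0 ≤ c) (hy : 1 ≤ y) :
    C * (c * log y ^ (1 / 3 : ℝ)) ^ C * exp (-2 * κ * (c * log y ^ (1 / 3 : ℝ)) ^ 3)
      = C * c ^ C * (log y ^ (C / 3) * y ^ (-(2 * κ * c ^ 3))) := by
  have hlog : 0 ≤ log y := log_nonneg hy
  have hpow : (c * log y ^ (1 / 3 : ℝ)) ^ C = c ^ C * log y ^ (C / 3) := by
    rw [mul_rpow hc (rpow_nonneg hlog _), ← rpow_mul hlog]; ring_nf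
  have hcube : (c * log y ^ (1 / 3 : ℝ)) ^ 3 = c ^ 3 * log y := by
    rw [mul_pow, ← rpow_natCast (log y ^ _), ← rpow_mul hlog]; norm_num
  rw [hpow, hcube, rpow_def_of_pos (by linarith : 0 < y) (-(2 * κ * c ^ 3))]
  ring_nf

lemma summable_mul_rpow_mul_exp_neg_cube {C κ c L : ℝ} (hc : 0 ≤ c) (hL : 0 < L)
    (hκc : 1 < 2 * κ * c ^ 3) :
    Summable fun n : ℕ => C * (c * log ((n + 1) * L) ^ (1 / 3 : ℝ)) ^ C
      * exp (-2 * κ * (c * log ((n + 1) * L) ^ (1 / 3 : ℝ)) ^ 3) := by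
  refine ((summable_log_rpow_mul_rpow_neg (r := C / 3) hκc hL).mul_left (C * c ^ C)).congr_atTop ?_
  filter_upwards [(tendsto_natCast_add_one_mul_atTop hL).eventually_ge_atTop 1] with n hn
  exact (mul_rpow_mul_exp_neg_cube_eq hc hn).symm

lemma iSup_Icc_eq_iSup_rat {a b : ℝ} (hab : a ≤ b) {f : ℝ → ℝ} (hf : Continuous f) :
    ⨆ t : Icc a b, f t = ⨆ q : ℚ, f (projIcc a b hab q) := by
  rw [← (projIcc_surjective hab).iSup_comp,
    ← Rat.denseRange_cast.ciSup' (f := fun t => f (projIcc a b hab t)) (by fun_prop)]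
  exact iSup_range' (fun t => f (projIcc a b hab t)) Rat.cast

lemma iSup_Icc_zero_eq_iSup_Icc_zero_one {T : ℝ} (hT : 0 < T) (g : ℝ → ℝ) :
    ⨆ t : Icc 0 T, g t = ⨆ s : Icc (0:ℝ) 1, g (T * s) := by
  calc ⨆ t : Icc 0 T, g t = sSup (g '' Icc 0 T) := sSup_image'.symm
    _ = sSup ((fun s => g (T * s)) '' Icc 0 1) := by
      rw [← image_image g (T * ·), image_mul_left_Icc hT.le zero_le_one, mul_zero, mul_one]
    _ = _ := sSup_image'

lemma ae_eventually_notMem_of_summable_toReal {Ω : Type*} {mΩ : MeasurableSpace Ω} {μ : Measure Ω}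
    [IsFiniteMeasure μ] {s : ℕ → Set Ω} (hs : Summable fun n => (μ (s n)).toReal) :
    ∀ᵐ ω ∂μ, ∀ᶠ n in atTop, ω ∉ s n := by
  refine ae_eventually_notMem ?_
  rw [← tsum_congr fun n => ENNReal.coe_toNNReal (measure_ne_top μ (s n))]
  exact ENNReal.tsum_coe_ne_top_iff_summable_coe.2 hs

section SelfSimilar

variable {Ω : Type*} {mΩ : MeasurableSpace Ω}

def IsSelfSimilar (P : Measure Ω) (X : ℝ → Ω → ℝ) (H : ℝ) : Prop :=
  ∀ lam : ℝ, 0 < lam →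
    P.map (fun ω => fun t : ℝ => X (lam * t) ω) = P.map (fun ω => fun t : ℝ => lam ^ H * X t ω)

lemma IsSelfSimilar.measure_le_iSup_Icc {P : Measure Ω} {X : ℝ → Ω → ℝ} {H : ℝ}
    (hX : IsSelfSimilar P X H) (hmeas : ∀ t, Measurable (X t))
    (hcont : ∀ ω, Continuous fun t => X t ω) {T : ℝ} (hT : 0 < T) (x : ℝ) :
    P {ω | x ≤ ⨆ t : Icc 0 T, X t ω} = P {ω | x / T ^ H ≤ ⨆ t : Icc (0:ℝ) 1, X t ω} := by
  -- On continuous paths the supremum over `[0, 1]` equals this measurable supremum over rationals.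
  set F : (ℝ → ℝ) → ℝ := fun f => ⨆ q : ℚ, f (projIcc (0:ℝ) 1 zero_le_one q)
  have hF : MeasurableSet (F ⁻¹' Ici x) :=
    (show Measurable F from Measurable.iSup fun q : ℚ => measurable_pi_apply _)
      measurableSet_Ici
  have hTH : 0 < T ^ H := rpow_pos_of_pos hT H
  have h_time : {ω | x ≤ ⨆ t : Icc 0 T, X t ω} = (fun ω t => X (T * t) ω) ⁻¹' (F ⁻¹' Ici x) := by
    ext ω
    simp only [mem_ofPred_eq, mem_preimage, mem_Ici, F]
    rw [iSup_Icc_zero_eq_iSup_Icc_zero_one hT (X · ω),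
      iSup_Icc_eq_iSup_rat zero_le_one (f := fun s => X (T * s) ω) (by fun_prop)]
  have h_space : {ω | x / T ^ H ≤ ⨆ t : Icc (0:ℝ) 1, X t ω}
      = (fun ω t => T ^ H * X t ω) ⁻¹' (F ⁻¹' Ici x) := by
    ext ω
    simp only [mem_ofPred_eq, mem_preimage, mem_Ici, F]
    rw [← iSup_Icc_eq_iSup_rat zero_le_one ((hcont ω).const_mul (T ^ H)),
      ← Real.mul_iSup_of_nonneg hTH.le, div_le_iff₀' hTH]
  rw [h_time, h_space, ← Measure.map_apply (by fun_prop) hF, ← Measure.map_apply (by fun_prop) hF,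
    hX T hT]

lemma IsSelfSimilar.summable_measure_mul_lilScale_le_iSup {P : Measure Ω} {X : ℝ → Ω → ℝ}
    (hX : IsSelfSimilar P X (2 / 3)) (hmeas : ∀ t, Measurable (X t))
    (hcont : ∀ ω, Continuous fun t => X t ω) {C κ c : ℝ}
    (htail : ∀ x : ℝ, 2 ≤ x →
      (P {ω | x ≤ ⨆ t : Icc (0:ℝ) 1, X t ω}).toReal ≤ C * x ^ C * exp (-2 * κ * x ^ 3))
    (hc : 0 < c) (hκc : 1 < 2 * κ * c ^ 3) {lam : ℝ} (hlam : 1 < lam) :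
    Summable fun n : ℕ => (P {ω | c * lilScale (2 / 3) (1 / 3) (lam ^ (n + 1))
      ≤ ⨆ t : Icc 0 (lam ^ (n + 1)), X t ω}).toReal := by
  have hL : 0 < log lam := log_pos hlam
  set x : ℕ → ℝ := fun n => c * log ((n + 1) * log lam) ^ (1 / 3 : ℝ)
  have hevent : ∀ n : ℕ, P {ω | c * lilScale (2 / 3) (1 / 3) (lam ^ (n + 1))
      ≤ ⨆ t : Icc 0 (lam ^ (n + 1)), X t ω} = P {ω | x n ≤ ⨆ t : Icc (0:ℝ) 1, X t ω} := by
    intro n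
    have hT : 0 < lam ^ (n + 1) := by positivity
    rw [hX.measure_le_iSup_Icc hmeas hcont hT, lilScale, mul_div_assoc,
      mul_div_cancel_left₀ _ (rpow_pos_of_pos hT _).ne', log_pow]
    push_cast
    rfl
  have hx : Tendsto x atTop atTop :=
    ((tendsto_rpow_atTop (by norm_num)).comp <| tendsto_log_atTop.comp <|
      tendsto_natCast_add_one_mul_atTop hL).const_mul_atTop hc
  refine .of_norm_bounded_eventually_nat (summable_mul_rpow_mul_exp_neg_cube (C := C) hc.le hL hκc) ?_
  filter_upwards [hx.eventually_ge_atTop 2] with n hn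
  rw [norm_of_nonneg ENNReal.toReal_nonneg, hevent n]
  exact htail _ hn

end SelfSimilar

lemma rpow_natCast_add_one (lam : ℝ) (n : ℕ) : lam ^ ((n : ℝ) + 1) = lam ^ (n + 1) := by
  norm_cast

lemma mul_rpow_mul_log_log_eq_mul_lilScale {lam : ℝ} (hlam : 0 < lam) (c : ℝ) (n : ℕ) :
    c * lam ^ (2 * ((n : ℝ) + 1) / 3) * log (log (lam ^ (n + 1))) ^ ((1 : ℝ) / 3)
      = c * lilScale (2 / 3) (1 / 3) (lam ^ (n + 1)) := by
  rw [mul_assoc, lilScale, ← rpow_natCast, ← rpow_mul hlam.le]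
  push_cast
  ring_nf

/-- for a process with the `2/3`-scaling property and tail bound
`P(sup_{[0,1]} X ≥ x) ≤ C x^C e^{-2κx³}`, the Borel–Cantelli series along `λⁿ`
converges, and a.s. `limsup_{t→∞} X_t / (t^{2/3}(ln ln t)^{1/3}) ≤ (1+ε)/(2κ)^{1/3}`. -/
theorem stmt_6 {Ω : Type*} {mΩ : MeasurableSpace Ω}
    (P : Measure Ω) [IsProbabilityMeasure P]
    (X : ℝ → Ω → ℝ) (hmeas : ∀ t, Measurable (X t))
    (hcont : ∀ ω, Continuous fun t => X t ω)
    (hscale : ∀ lam : ℝ, 0 < lam →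
      Measure.map (fun ω => fun t : ℝ => X (lam * t) ω) P =
        Measure.map (fun ω => fun t : ℝ => lam ^ ((2:ℝ)/3) * X t ω) P)
    (κ : ℝ) (hκ : 0 < κ)
    (htail : ∃ C > (0:ℝ), ∀ x : ℝ, 2 ≤ x →
      (P {ω | x ≤ ⨆ t : Set.Icc (0:ℝ) 1, X t.1 ω}).toReal
        ≤ C * x ^ (C:ℝ) * Real.exp (-2 * κ * x ^ 3)) :
    (∀ ε > (0:ℝ), ∀ lam : ℝ, 1 < lam →
      Summable (fun n : ℕ =>
        (P {ω | (1 + ε) / (2 * κ) ^ ((1:ℝ)/3) * lam ^ (2 * ((n:ℝ)+1) / 3)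
              * (Real.log (Real.log (lam ^ ((n:ℝ)+1)))) ^ ((1:ℝ)/3)
            ≤ ⨆ t : Set.Icc (0:ℝ) (lam ^ ((n:ℝ)+1)), X t.1 ω}).toReal)) ∧
    (∀ ε > (0:ℝ), ∀ᵐ ω ∂P,
      Filter.limsup
        (fun t : ℝ => X t ω / (t ^ ((2:ℝ)/3) * (Real.log (Real.log t)) ^ ((1:ℝ)/3)))
        atTop ≤ (1 + ε) / (2 * κ) ^ ((1:ℝ)/3)) := by
  obtain ⟨C, -, htail⟩ := htail
  have hcube : ((2 * κ) ^ ((1 : ℝ) / 3)) ^ 3 = 2 * κ := by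
    rw [← rpow_natCast, ← rpow_mul (by positivity)]; norm_num
  have hκc : ∀ δ > (0:ℝ), 1 < 2 * κ * ((1 + δ) / (2 * κ) ^ ((1 : ℝ) / 3)) ^ 3 := fun δ hδ => by
    rw [div_pow, hcube, mul_div_cancel₀ _ (by positivity)]
    exact one_lt_pow₀ (by linarith) (by norm_num)
  refine ⟨fun ε hε lam hlam => ?_, fun ε hε => ?_⟩
  · refine (IsSelfSimilar.summable_measure_mul_lilScale_le_iSup hscale hmeas hcont htail
      (by positivity) (hκc ε hε) hlam).congr fun n => ?_
    rw [rpow_natCast_add_one, mul_rpow_mul_log_log_eq_mul_lilScale (by linarith)]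
  set u := (1 + ε) / (1 + ε / 2) with hu_def
  have hu : 1 < u := (one_lt_div (by positivity)).2 (by linarith)
  filter_upwards [ae_eventually_notMem_of_summable_toReal
    (IsSelfSimilar.summable_measure_mul_lilScale_le_iSup hscale hmeas hcont htail
      (by positivity) (hκc (ε / 2) (by positivity)) hu)] with ω hω
  calc _ ≤ (1 + ε / 2) / (2 * κ) ^ ((1 : ℝ) / 3) * (u ^ ((2 : ℝ) / 3) * u ^ ((1 : ℝ) / 3)) :=
        limsup_div_lilScale_le (hcont ω) (by norm_num) (by norm_num) hu (by positivity)
          (hω.mono fun n hn => not_le.1 hn)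
    _ = (1 + ε) / (2 * κ) ^ ((1 : ℝ) / 3) := by
      rw [← rpow_add (by linarith)]
      norm_num [hu_def]
      field_simp
end
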